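/- arXiv:1006.3493 — 2 statements merged into one kernel-verified Lean document; each statement's English description precedes it below -/
import Mathlib

section
/- Let m and F be positive integers with F > 2m and F not a multiple of m. Then a numerical semigroup S with multiplicity m and Frobenius number F is maximal (with respect to inclusion) among numerical semigroups with multiplicity m and Frobenius number F if and only if S is irreducible. -/
def IsNumericalSemigroup (S : Set ℕ) : Prop :=
  0 ∈ S ∧ (∀ a ∈ S, ∀ b ∈ S, a + b ∈ S) ∧ Sᶜ.Finite

noncomputable def multNS (S : Set ℕ) : ℕ := sInf {x ∈ S | x ≠ 0}

noncomputable def frobNS (S : Set ℕ) : ℕ := sSup Sᶜ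

noncomputable def genusNS (S : Set ℕ) : ℕ := Sᶜ.ncard

/-- `S` is `m`-irreducible: it lies in `𝒮(m)` and is not the intersection of two
elements of `𝒮(m)` properly containing it. -/
def MIrreducibleNS (m : ℕ) (S : Set ℕ) : Prop :=
  IsNumericalSemigroup S ∧ multNS S = m ∧
    ¬∃ S₁ S₂ : Set ℕ, (IsNumericalSemigroup S₁ ∧ multNS S₁ = m) ∧
      (IsNumericalSemigroup S₂ ∧ multNS S₂ = m) ∧ S ⊂ S₁ ∧ S ⊂ S₂ ∧ S = S₁ ∩ S₂

/-- `S` is irreducible: not the intersection of two numerical semigroups properly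
containing it. -/
def IrreducibleNS (S : Set ℕ) : Prop :=
  IsNumericalSemigroup S ∧
    ¬∃ S₁ S₂ : Set ℕ, IsNumericalSemigroup S₁ ∧ IsNumericalSemigroup S₂ ∧
      S ⊂ S₁ ∧ S ⊂ S₂ ∧ S = S₁ ∩ S₂

lemma ns_not_mem_le_frob {S : Set ℕ} (hS : IsNumericalSemigroup S) {n : ℕ}
    (hn : n ∉ S) : n ≤ frobNS S :=
  le_csSup hS.2.2.bddAbove hn

lemma ns_frob_not_mem {S : Set ℕ} (hS : IsNumericalSemigroup S)
    (hne : frobNS S ≠ 0) : frobNS S ∉ S := by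
  have hcne : Sᶜ.Nonempty := by
    by_contra h
    rw [Set.not_nonempty_iff_eq_empty] at h
    simp [frobNS, h] at hne
  exact Nat.sSup_mem hcne hS.2.2.bddAbove

lemma ns_mult_mem {S : Set ℕ} (hS : IsNumericalSemigroup S) :
    multNS S ∈ S ∧ multNS S ≠ 0 := by
  have h1 : frobNS S + 1 ∈ S := by
    by_contra h
    have := ns_not_mem_le_frob hS h
    omega
  have hne : {x ∈ S | x ≠ 0}.Nonempty := ⟨frobNS S + 1, h1, by omega⟩
  exact Nat.sInf_mem hne

lemma ns_insert {S : Set ℕ} {x : ℕ} (hS : IsNumericalSemigroup S)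
    (h1 : ∀ a ∈ S, a ≠ 0 → a + x ∈ S) (h2 : x + x ∈ S) :
    IsNumericalSemigroup (insert x S) := by
  refine ⟨Set.mem_insert_of_mem _ hS.1, ?_, ?_⟩
  · intro a ha b hb
    have key : ∀ c ∈ S, c + x ∈ insert x S := by
      intro c hc
      rcases eq_or_ne c 0 with rfl | hc0
      · simp
      · exact Set.mem_insert_of_mem _ (h1 c hc hc0)
    rcases ha with rfl | ha
    · rcases hb with rfl | hb
      · exact Set.mem_insert_of_mem _ h2
      · rw [add_comm]; exact key b hb
    · rcases hb with rfl | hb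
      · exact key a ha
      · exact Set.mem_insert_of_mem _ (hS.2.1 a ha b hb)
  · exact hS.2.2.subset (fun z hz => by
      simp only [Set.mem_compl_iff, Set.mem_insert_iff, not_or] at hz ⊢
      exact hz.2)

lemma ns_frob_insert {S : Set ℕ} {x F : ℕ} (hS : IsNumericalSemigroup S)
    (hF0 : F ≠ 0) (hFS : frobNS S = F) (hxF : x ≠ F) :
    frobNS (insert x S) = F := by
  have hFn : F ∉ S := hFS ▸ ns_frob_not_mem hS (hFS ▸ hF0)
  have hFm : F ∈ (insert x S)ᶜ := by
    simp only [Set.mem_compl_iff, Set.mem_insert_iff, not_or]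
    exact ⟨fun h => hxF h.symm, hFn⟩
  have hfin : ((insert x S)ᶜ : Set ℕ).Finite := hS.2.2.subset (fun z hz => by
      simp only [Set.mem_compl_iff, Set.mem_insert_iff, not_or] at hz ⊢
      exact hz.2)
  refine le_antisymm (csSup_le ⟨F, hFm⟩ ?_) (le_csSup hfin.bddAbove hFm)
  intro z hz
  have : z ∉ S := by
    simp only [Set.mem_compl_iff, Set.mem_insert_iff, not_or] at hz
    exact hz.2
  exact (ns_not_mem_le_frob hS this).trans_eq hFS

lemma ns_mult_insert {S : Set ℕ} {x m : ℕ} (hmS : m ∈ S) (hm0 : m ≠ 0)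
    (hmle : ∀ s ∈ S, s ≠ 0 → m ≤ s) (hmx : m ≤ x) :
    multNS (insert x S) = m := by
  refine le_antisymm (Nat.sInf_le ⟨Set.mem_insert_of_mem _ hmS, hm0⟩) ?_
  refine le_csInf ⟨m, Set.mem_insert_of_mem _ hmS, hm0⟩ ?_
  rintro y ⟨hy, hy0⟩
  rcases hy with rfl | hy
  · exact hmx
  · exact hmle y hy hy0

theorem stmt9 (m F : ℕ) (hm : 0 < m) (hF : 2 * m < F) (hdvd : ¬ m ∣ F)
    (S : Set ℕ) (hS : IsNumericalSemigroup S) (hmS : multNS S = m) (hFS : frobNS S = F) :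
    (∀ T : Set ℕ, IsNumericalSemigroup T → multNS T = m → frobNS T = F → S ⊆ T → T = S) ↔
      IrreducibleNS S := by
  have hF0 : (0:ℕ) < F := by omega
  have hFn : F ∉ S := hFS ▸ ns_frob_not_mem hS (hFS ▸ hF0.ne')
  have hgt : ∀ n, F < n → n ∈ S := by
    intro n hn
    by_contra h
    have := (ns_not_mem_le_frob hS h).trans_eq hFS
    omega
  have hmS' : m ∈ S := hmS ▸ (ns_mult_mem hS).1
  have hmle : ∀ s ∈ S, s ≠ 0 → m ≤ s := fun s hs h0 => hmS ▸ Nat.sInf_le ⟨hs, h0⟩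
  constructor
  · intro hmax
    -- Step 1: the (pseudo-)symmetry property P
    have hP : ∀ x, x ∉ S → x ≠ F → 2 * x ≠ F → F - x ∈ S := by
      by_contra hPc
      push_neg at hPc
      obtain ⟨x₀, hx₀1, hx₀2, hx₀3, hx₀4⟩ := hPc
      set A : Set ℕ := {z | z ∉ S ∧ z ≠ F ∧ 2 * z ≠ F ∧ F - z ∉ S} with hAdef
      have hAfin : A.Finite := hS.2.2.subset (fun z hz => hz.1)
      have hAne : A.Nonempty := ⟨x₀, hx₀1, hx₀2, hx₀3, hx₀4⟩
      set x := sSup A with hxdef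
      have hxA : x ∈ A := Nat.sSup_mem hAne hAfin.bddAbove
      have hxmax : ∀ z ∈ A, z ≤ x := fun z hz => le_csSup hAfin.bddAbove hz
      obtain ⟨hxS, hxF, hx2, hxFS⟩ := hxA
      have hxle : x ≤ F := (ns_not_mem_le_frob hS hxS).trans_eq hFS
      have hx0 : x ≠ 0 := fun h => hxS (h ▸ hS.1)
      have hFxA : F - x ∈ A := by
        refine ⟨hxFS, by omega, by omega, ?_⟩
        rwa [Nat.sub_sub_self hxle]
      have h2x : F < 2 * x := by
        have := hxmax _ hFxA
        omega
      have hclo : ∀ a ∈ S, a ≠ 0 → a + x ∈ S := by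
        intro a ha ha0
        by_contra hax
        have haxF : a + x ≤ F := by
          by_contra h
          exact hax (hgt _ (by omega))
        have haxne : a + x ≠ F := by
          intro h
          have : F - x = a := by omega
          exact hxFS (this ▸ ha)
        have hFax : F - (a + x) ∈ S := by
          by_contra h
          have hmem : a + x ∈ A := ⟨hax, haxne, by omega, h⟩
          have := hxmax _ hmem
          omega
        have : F - x ∈ S := by
          have := hS.2.1 _ hFax a ha
          have heq : F - (a + x) + a = F - x := by omega
          rwa [heq] at this
        exact hxFS this
      have h2xS : x + x ∈ S := hgt _ (by omega)
      have hT : IsNumericalSemigroup (insert x S) := ns_insert hS hclo h2xS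
      have hTf : frobNS (insert x S) = F := ns_frob_insert hS hF0.ne' hFS hxF
      have hTm : multNS (insert x S) = m := ns_mult_insert hmS' (by omega) hmle (by omega)
      have := hmax _ hT hTm hTf (Set.subset_insert _ _)
      exact hxS (this ▸ Set.mem_insert x S)
    -- Step 2: P implies irreducibility
    refine ⟨hS, ?_⟩
    rintro ⟨S₁, S₂, h₁, h₂, hsub₁, hsub₂, heq⟩
    have key : ∀ T : Set ℕ, IsNumericalSemigroup T → S ⊂ T → F ∉ T → False := by
      intro T hT hsub hFT
      obtain ⟨y, hyT, hyS⟩ := Set.exists_of_ssubset hsub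
      have hyF : y ≠ F := fun h => hFT (h ▸ hyT)
      have hy2 : 2 * y ≠ F := by
        intro h
        exact hFT (h ▸ (by simpa [two_mul] using hT.2.1 y hyT y hyT))
      have hFy : F - y ∈ S := hP y hyS hyF hy2
      have hyleF : y ≤ F := (ns_not_mem_le_frob hS hyS).trans_eq hFS
      have : F ∈ T := by
        have := hT.2.1 y hyT (F - y) (hsub.1 hFy)
        rwa [Nat.add_sub_cancel' hyleF] at this
      exact hFT this
    have : F ∉ S₁ ∨ F ∉ S₂ := by
      by_contra h
      push_neg at h
      exact hFn (heq ▸ Set.mem_inter h.1 h.2)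
    rcases this with h | h
    · exact key S₁ h₁ hsub₁ h
    · exact key S₂ h₂ hsub₂ h
  · intro hirr T hT hmT hFT hsub
    by_contra hne
    have hss : S ⊂ T := ⟨hsub, fun h => hne (subset_antisymm h hsub)⟩
    have hFTn : F ∉ T := hFT ▸ ns_frob_not_mem hT (hFT ▸ hF0.ne')
    have hDfin : (T \ S).Finite := hS.2.2.subset (fun z hz => hz.2)
    have hDne : (T \ S).Nonempty := by
      obtain ⟨y, hy⟩ := Set.exists_of_ssubset hss
      exact ⟨y, hy⟩
    set x := sSup (T \ S) with hxdef
    have hxD : x ∈ T \ S := Nat.sSup_mem hDne hDfin.bddAbove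
    have hxmax : ∀ z ∈ T \ S, z ≤ x := fun z hz => le_csSup hDfin.bddAbove hz
    obtain ⟨hxT, hxS⟩ := hxD
    have hxF : x ≠ F := fun h => hFTn (h ▸ hxT)
    have hx0 : x ≠ 0 := fun h => hxS (h ▸ hS.1)
    have hclo : ∀ a ∈ S, a ≠ 0 → a + x ∈ S := by
      intro a ha ha0
      have haxT : a + x ∈ T := hT.2.1 a (hsub ha) x hxT
      by_contra hax
      have := hxmax _ ⟨haxT, hax⟩
      omega
    have h2xS : x + x ∈ S := by
      have h2T : x + x ∈ T := hT.2.1 x hxT x hxT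
      by_contra h
      have := hxmax _ ⟨h2T, h⟩
      omega
    have hS₁ : IsNumericalSemigroup (insert x S) := ns_insert hS hclo h2xS
    have hS₂ : IsNumericalSemigroup (insert F S) := by
      refine ns_insert hS (fun a ha ha0 => hgt _ (by omega)) (hgt _ (by omega))
    refine hirr.2 ⟨insert x S, insert F S, hS₁, hS₂, Set.ssubset_insert hxS,
      Set.ssubset_insert hFn, ?_⟩
    ext y
    simp only [Set.mem_inter_iff, Set.mem_insert_iff]
    constructor
    · intro hy
      exact ⟨Or.inr hy, Or.inr hy⟩
    · rintro ⟨hy1 | hy1, hy2 | hy2⟩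
      · exact absurd (hy1 ▸ hy2 : x = F) hxF
      · exact absurd hy2 (hy1 ▸ hxS)
      · exact absurd hy1 (hy2 ▸ hFn)
      · exact hy1
end

section
/- If S is an m-irreducible numerical semigroup with multiplicity m, then g(S) = m−1 if F(S) = m−1; g(S) = m if m < F(S) < 2m; and g(S) = ⌈(F(S)+1)/2⌉ if F(S) > 2m. -/
section Helpers

variable {S : Set ℕ}

lemma ns_nonzero (hS : IsNumericalSemigroup S) : {x ∈ S | x ≠ 0}.Nonempty := by
  have h1 : (Sᶜ)ᶜ.Infinite := hS.2.2.infinite_compl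
  rw [compl_compl] at h1
  have h2 : (S \ {0}).Infinite := h1.diff (Set.finite_singleton 0)
  obtain ⟨x, hx⟩ := h2.nonempty
  exact ⟨x, hx.1, hx.2⟩

lemma mult_mem (hS : IsNumericalSemigroup S) : multNS S ∈ S ∧ multNS S ≠ 0 :=
  Nat.sInf_mem (ns_nonzero hS)

lemma notMem_of_lt_mult (hS : IsNumericalSemigroup S) {x : ℕ} (hx0 : x ≠ 0)
    (hx : x < multNS S) : x ∉ S := by
  intro hxS
  have hle : multNS S ≤ x := Nat.sInf_le (show x ∈ {y ∈ S | y ≠ 0} from ⟨hxS, hx0⟩)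
  omega

lemma mem_of_frob_lt (hS : IsNumericalSemigroup S) {x : ℕ} (hx : frobNS S < x) : x ∈ S := by
  by_contra hxS
  exact absurd (le_csSup hS.2.2.bddAbove hxS) (not_le.mpr hx)

lemma frob_not_mem (hS : IsNumericalSemigroup S) (hne : Sᶜ.Nonempty) : frobNS S ∉ S :=
  Nat.sSup_mem hne hS.2.2.bddAbove

lemma compl_nonempty (hS : IsNumericalSemigroup S) (h : 0 < frobNS S) : Sᶜ.Nonempty := by
  by_contra hne
  rw [Set.not_nonempty_iff_eq_empty] at hne
  rw [frobNS, hne] at h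
  simp at h

lemma union_ns (hS : IsNumericalSemigroup S) {h : ℕ}
    (hadd : ∀ s ∈ S, s ≠ 0 → h + s ∈ S) (h2 : h + h ∈ S) :
    IsNumericalSemigroup (S ∪ {h}) := by
  refine ⟨Or.inl hS.1, ?_, ?_⟩
  · rintro a (haS | ha) b (hbS | hb)
    · exact Or.inl (hS.2.1 a haS b hbS)
    · simp only [Set.mem_singleton_iff] at hb; subst hb
      rcases eq_or_ne a 0 with rfl | ha0
      · simp
      · exact Or.inl (by rw [add_comm]; exact hadd a haS ha0)
    · simp only [Set.mem_singleton_iff] at ha; subst ha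
      rcases eq_or_ne b 0 with rfl | hb0
      · simp
      · exact Or.inl (hadd b hbS hb0)
    · simp only [Set.mem_singleton_iff] at ha hb; subst ha; subst hb
      exact Or.inl h2
  · refine hS.2.2.subset ?_
    intro x hx
    simp only [Set.mem_compl_iff, Set.mem_union] at hx ⊢
    exact fun hmem => hx (Or.inl hmem)

lemma mult_union (hS : IsNumericalSemigroup S) {g : ℕ} (hg : multNS S < g) :
    multNS (S ∪ {g}) = multNS S := by
  have hm := mult_mem hS
  have hmem : multNS S ∈ {x ∈ S ∪ {g} | x ≠ 0} := ⟨Or.inl hm.1, hm.2⟩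
  have h1 : multNS (S ∪ {g}) ≤ multNS S := Nat.sInf_le hmem
  have h2 : multNS (S ∪ {g}) ∈ {x ∈ S ∪ {g} | x ≠ 0} := Nat.sInf_mem ⟨_, hmem⟩
  rcases h2.1 with h3 | h3
  · exact le_antisymm h1 (Nat.sInf_le ⟨h3, h2.2⟩)
  · simp only [Set.mem_singleton_iff] at h3
    omega

/-- Two distinct gaps above the multiplicity whose closure conditions hold
contradict m-irreducibility. -/
lemma key_decomp {m : ℕ} (hmi : MIrreducibleNS m S) {g₁ g₂ : ℕ}
    (hne : g₁ ≠ g₂) (hg₁ : g₁ ∉ S) (hg₂ : g₂ ∉ S)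
    (hm₁ : multNS S < g₁) (hm₂ : multNS S < g₂)
    (hc₁ : ∀ s ∈ S, s ≠ 0 → g₁ + s ∈ S) (hc₁₂ : g₁ + g₁ ∈ S)
    (hc₂ : ∀ s ∈ S, s ≠ 0 → g₂ + s ∈ S) (hc₂₂ : g₂ + g₂ ∈ S) : False := by
  obtain ⟨hS, hmS, hirr⟩ := hmi
  apply hirr
  refine ⟨S ∪ {g₁}, S ∪ {g₂}, ⟨union_ns hS hc₁ hc₁₂, by rw [mult_union hS hm₁, hmS]⟩,
    ⟨union_ns hS hc₂ hc₂₂, by rw [mult_union hS hm₂, hmS]⟩, ?_, ?_, ?_⟩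
  · exact ⟨Set.subset_union_left, fun hsub => hg₁ (hsub (Or.inr rfl))⟩
  · exact ⟨Set.subset_union_left, fun hsub => hg₂ (hsub (Or.inr rfl))⟩
  · ext x
    constructor
    · exact fun hx => ⟨Or.inl hx, Or.inl hx⟩
    · rintro ⟨hx₁ | hx₁, hx₂ | hx₂⟩ <;> simp_all [Set.mem_singleton_iff]

end Helpers

theorem stmt12 (m : ℕ) (S : Set ℕ) (h : MIrreducibleNS m S) :
    (frobNS S = m - 1 → genusNS S = m - 1) ∧
    (m < frobNS S ∧ frobNS S < 2 * m → genusNS S = m) ∧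
    (2 * m < frobNS S → genusNS S = (frobNS S + 2) / 2) := by
  classical
  have hS := h.1
  have hmS := h.2.1
  have hm := mult_mem hS
  have hm0 : m ≠ 0 := hmS ▸ hm.2
  have hmem : m ∈ S := hmS ▸ hm.1
  have hsge : ∀ s ∈ S, s ≠ 0 → m ≤ s := fun s hs h0 => hmS ▸ Nat.sInf_le (show s ∈ {y ∈ S | y ≠ 0} from ⟨hs, h0⟩)
  have hgaple : ∀ x, x ∉ S → x ≤ frobNS S := fun x hx => le_csSup hS.2.2.bddAbove hx
  set F := frobNS S with hFdef
  refine ⟨?_, ?_, ?_⟩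
  · -- Case F = m - 1
    intro hF1
    have hSc : Sᶜ = Set.Ico 1 m := by
      ext x
      simp only [Set.mem_compl_iff, Set.mem_Ico]
      constructor
      · intro hx
        have h1 := hgaple x hx
        have h0 : x ≠ 0 := fun e => hx (e ▸ hS.1)
        omega
      · rintro ⟨h1, h2⟩
        exact notMem_of_lt_mult hS (by omega) (by rw [hmS]; omega)
    rw [genusNS, hSc, ← Finset.coe_Ico, Set.ncard_coe_finset, Nat.card_Ico]
  · -- Case m < F < 2m
    rintro ⟨hmF, hF2m⟩
    have hcne : Sᶜ.Nonempty := compl_nonempty hS (by omega)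
    have hFnotS : F ∉ S := frob_not_mem hS hcne
    have hnogap : ∀ x, x ∉ S → x < F → x < m := by
      intro x hx hxF
      by_contra hge
      push_neg at hge
      have hxm : m < x := lt_of_le_of_ne hge (fun e => hx (e ▸ hmem))
      have hcx : ∀ s ∈ S, s ≠ 0 → x + s ∈ S := by
        intro s hs h0
        have := hsge s hs h0
        exact mem_of_frob_lt hS (by omega)
      have hcF : ∀ s ∈ S, s ≠ 0 → F + s ∈ S := by
        intro s hs h0
        have := hsge s hs h0
        exact mem_of_frob_lt hS (by omega)
      exact key_decomp h (show x ≠ F by omega) hx hFnotS (by rw [hmS]; omega)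
        (by rw [hmS]; omega) hcx (mem_of_frob_lt hS (by omega)) hcF
        (mem_of_frob_lt hS (by omega))
    have hSc : Sᶜ = Set.Ico 1 m ∪ {F} := by
      ext x
      simp only [Set.mem_compl_iff, Set.mem_union, Set.mem_Ico, Set.mem_singleton_iff]
      constructor
      · intro hx
        have hle := hgaple x hx
        have h0 : x ≠ 0 := fun e => hx (e ▸ hS.1)
        rcases eq_or_lt_of_le hle with he | hlt
        · right; exact he
        · left; exact ⟨by omega, hnogap x hx hlt⟩
      · rintro (⟨h1, h2⟩ | rfl)
        · exact notMem_of_lt_mult hS (by omega) (by rw [hmS]; omega)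
        · exact hFnotS
    have hdisj : Disjoint (Set.Ico 1 m) ({F} : Set ℕ) := by
      simp only [Set.disjoint_singleton_right, Set.mem_Ico]
      omega
    rw [genusNS, hSc, Set.ncard_union_eq hdisj (Set.finite_Ico _ _) (Set.finite_singleton _),
      ← Finset.coe_Ico, Set.ncard_coe_finset, Nat.card_Ico, Set.ncard_singleton]
    omega
  · -- Case 2m < F
    intro hF3
    have hcne : Sᶜ.Nonempty := compl_nonempty hS (by omega)
    have hFnotS : F ∉ S := frob_not_mem hS hcne
    -- symmetry-type property
    have hP : ∀ x, x ∉ S → 2 * x ≠ F → F - x ∈ S := by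
      by_contra hC
      push_neg at hC
      obtain ⟨x0, hx0S, hx02, hx0F⟩ := hC
      set C : Set ℕ := {x | x ∉ S ∧ F - x ∉ S ∧ 2 * x ≠ F} with hCdef
      have hCsub : C ⊆ Sᶜ := fun y hy => hy.1
      have hCne : C.Nonempty := ⟨x0, hx0S, hx0F, hx02⟩
      have hCbdd : BddAbove C := (hS.2.2.subset hCsub).bddAbove
      set g := sSup C with hgdef
      have hgC : g ∈ C := Nat.sSup_mem hCne hCbdd
      have hgmax : ∀ y ∈ C, y ≤ g := fun y hy => le_csSup hCbdd hy
      obtain ⟨hgS, hgFS, hg2⟩ := hgC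
      have hgleF : g ≤ F := hgaple g hgS
      have hgltF : g < F := lt_of_le_of_ne hgleF
        (fun e => hgFS (by rw [e, Nat.sub_self]; exact hS.1))
      have h2g : F < 2 * g := by
        rcases lt_trichotomy (2 * g) F with hlt | heq | hgt
        · have hFg : F - g ∈ C := by
            refine ⟨hgFS, ?_, by omega⟩
            rw [Nat.sub_sub_self hgleF]
            exact hgS
          have := hgmax _ hFg
          omega
        · exact absurd heq hg2
        · exact hgt
      have hgm : m < g := by omega
      have hadd : ∀ s ∈ S, s ≠ 0 → g + s ∈ S := by
        intro s hs hs0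
        by_contra hgs
        have hgsle : g + s ≤ F := hgaple _ hgs
        have hgsF : g + s ≠ F := by
          intro e
          apply hgFS
          rw [show F - g = s by omega]
          exact hs
        have hmemC : g + s ∈ C := by
          refine ⟨hgs, ?_, by omega⟩
          intro hFS'
          apply hgFS
          rw [show F - g = (F - (g + s)) + s by omega]
          exact hS.2.1 _ hFS' _ hs
        have := hgmax _ hmemC
        omega
      have hcF : ∀ s ∈ S, s ≠ 0 → F + s ∈ S := by
        intro s hs h0
        exact mem_of_frob_lt hS (by omega)
      exact key_decomp h (show g ≠ F by omega) hgS hFnotS (by rw [hmS]; omega)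
        (by rw [hmS]; omega) hadd (mem_of_frob_lt hS (by omega)) hcF
        (mem_of_frob_lt hS (by omega))
    have hQ : ∀ x, x ∈ S → x ≤ F → F - x ∉ S := by
      intro x hx hxF hFx
      apply hFnotS
      rw [show F = x + (F - x) by omega]
      exact hS.2.1 _ hx _ hFx
    -- counting
    set A : Finset ℕ := (Finset.range (F + 1)).filter (fun x => x ∉ S) with hA
    set B : Finset ℕ := (Finset.range (F + 1)).filter (fun x => x ∈ S) with hB
    have hgenus : genusNS S = A.card := by
      rw [genusNS]
      have hco : Sᶜ = ↑A := by
        ext x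
        simp only [hA, Finset.coe_filter, Finset.mem_range, Set.mem_compl_iff, Set.mem_setOf_eq]
        constructor
        · intro hx
          exact ⟨by have := hgaple x hx; omega, hx⟩
        · rintro ⟨-, hx⟩
          exact hx
      rw [hco, Set.ncard_coe_finset]
    have hABcard : A.card + B.card = F + 1 := by
      have hdisj : Disjoint A B := by
        simp only [Finset.disjoint_left, hA, hB, Finset.mem_filter]
        rintro a ⟨-, ha⟩ ⟨-, ha'⟩
        exact ha ha'
      have hunion : A ∪ B = Finset.range (F + 1) := by
        ext x
        simp only [Finset.mem_union, hA, hB, Finset.mem_filter, Finset.mem_range]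
        constructor
        · rintro (⟨h1, -⟩ | ⟨h1, -⟩) <;> exact h1
        · intro h1
          by_cases hx : x ∈ S
          · exact Or.inr ⟨h1, hx⟩
          · exact Or.inl ⟨h1, hx⟩
      rw [← Finset.card_union_of_disjoint hdisj, hunion, Finset.card_range]
    set A' : Finset ℕ := A.filter (fun y => 2 * y ≠ F) with hA'
    have hBA' : B.card = A'.card := by
      apply Finset.card_bij (fun x _ => F - x)
      · intro a ha
        simp only [hB, Finset.mem_filter, Finset.mem_range] at ha
        obtain ⟨haF, haS⟩ := ha
        have h1 : F - a ∉ S := hQ a haS (by omega)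
        have h2 : 2 * (F - a) ≠ F := by
          intro he
          rw [show F - a = a by omega] at h1
          exact h1 haS
        simp only [hA', hA, Finset.mem_filter, Finset.mem_range]
        exact ⟨⟨by omega, h1⟩, h2⟩
      · intro a ha b hb hab
        simp only [hB, Finset.mem_filter, Finset.mem_range] at ha hb
        omega
      · intro b hb
        simp only [hA', hA, Finset.mem_filter, Finset.mem_range] at hb
        obtain ⟨⟨hbF, hbS⟩, hb2⟩ := hb
        refine ⟨F - b, ?_, by omega⟩
        simp only [hB, Finset.mem_filter, Finset.mem_range]
        exact ⟨by omega, hP b hbS hb2⟩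
    rcases Nat.even_or_odd F with ⟨k, hk⟩ | hodd
    · -- F even, F = k + k
      have hkS : k ∉ S := by
        intro hkmem
        apply hFnotS
        rw [show F = k + k from hk]
        exact hS.2.1 _ hkmem _ hkmem
      have hAeq : A = insert k A' := by
        ext y
        simp only [hA', Finset.mem_insert, Finset.mem_filter]
        constructor
        · intro hy
          by_cases h2 : 2 * y = F
          · left; omega
          · right; exact ⟨hy, h2⟩
        · rintro (rfl | ⟨hy, -⟩)
          · simp only [hA, Finset.mem_filter, Finset.mem_range]
            exact ⟨by omega, hkS⟩
          · exact hy
      have hkA' : k ∉ A' := by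
        simp only [hA', Finset.mem_filter]
        rintro ⟨-, h2⟩
        omega
      have hcard : A.card = A'.card + 1 := by
        rw [hAeq, Finset.card_insert_of_notMem hkA']
      rw [hgenus]
      omega
    · -- F odd
      obtain ⟨j, hj⟩ := hodd
      have hAeq : A' = A := by
        apply Finset.filter_true_of_mem
        intro y hy
        omega
      rw [hAeq] at hBA'
      rw [hgenus]
      omega
end
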